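/- Let V solve KdV and ψ > 0 satisfy ψ_t = 2Vψ_x - V_xψ and ψ_xx = Vψ. With φ = ψ_x/ψ, the function V̂ = φ² - φ_x also solves the KdV equation (auto-Bäcklund transformation for KdV). -/

import Mathlib

noncomputable section

/-- Partial derivative with respect to the first (space) variable. -/
def px (f : ℝ × ℝ → ℝ) : ℝ × ℝ → ℝ := fun p => deriv (fun x => f (x, p.2)) p.1

/-- Partial derivative with respect to the second (time) variable. -/
def pt (f : ℝ × ℝ → ℝ) : ℝ × ℝ → ℝ := fun p => deriv (fun t => f (p.1, t)) p.2

/-- The KdV functional `KdV(V) = V_t - 6 V V_x + V_xxx`. -/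
def KdVop (f : ℝ × ℝ → ℝ) : ℝ × ℝ → ℝ :=
  fun p => pt f p - 6 * f p * px f p + px (px (px f)) p

/-- The mKdV functional `mKdV(φ) = φ_t - 6 φ² φ_x + φ_xxx`. -/
def mKdVop (f : ℝ × ℝ → ℝ) : ℝ × ℝ → ℝ :=
  fun p => pt f p - 6 * (f p) ^ 2 * px f p + px (px (px f)) p

theorem hasDerivX {f : ℝ × ℝ → ℝ} (hf : ContDiff ℝ (⊤ : ℕ∞) f) (p : ℝ × ℝ) :
    HasDerivAt (fun x => f (x, p.2)) (px f p) p.1 := by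
  have h1 : HasDerivAt (fun x : ℝ => (x, p.2)) ((1:ℝ), (0:ℝ)) p.1 :=
    HasDerivAt.prodMk (hasDerivAt_id p.1) (hasDerivAt_const p.1 p.2)
  have h2 := (hf.differentiable (by simp) p).hasFDerivAt.comp_hasDerivAt p.1 h1
  have h3 : px f p = fderiv ℝ f p (1, 0) := by
    simpa [px, Function.comp_def] using h2.deriv
  rw [h3]; simpa [Function.comp_def] using h2

theorem hasDerivT {f : ℝ × ℝ → ℝ} (hf : ContDiff ℝ (⊤ : ℕ∞) f) (p : ℝ × ℝ) :
    HasDerivAt (fun t => f (p.1, t)) (pt f p) p.2 := by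
  have h1 : HasDerivAt (fun t : ℝ => (p.1, t)) ((0:ℝ), (1:ℝ)) p.2 :=
    HasDerivAt.prodMk (hasDerivAt_const p.2 p.1) (hasDerivAt_id p.2)
  have h2 := (hf.differentiable (by simp) p).hasFDerivAt.comp_hasDerivAt p.2 h1
  have h3 : pt f p = fderiv ℝ f p (0, 1) := by
    simpa [pt, Function.comp_def] using h2.deriv
  rw [h3]; simpa [Function.comp_def] using h2

theorem px_eq_fderiv {f : ℝ × ℝ → ℝ} (hf : ContDiff ℝ (⊤ : ℕ∞) f) (p : ℝ × ℝ) :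
    px f p = fderiv ℝ f p (1, 0) := by
  have h1 : HasDerivAt (fun x : ℝ => (x, p.2)) ((1:ℝ), (0:ℝ)) p.1 :=
    HasDerivAt.prodMk (hasDerivAt_id p.1) (hasDerivAt_const p.1 p.2)
  have h2 := (hf.differentiable (by simp) p).hasFDerivAt.comp_hasDerivAt p.1 h1
  simpa [px, Function.comp_def] using h2.deriv

theorem pt_eq_fderiv {f : ℝ × ℝ → ℝ} (hf : ContDiff ℝ (⊤ : ℕ∞) f) (p : ℝ × ℝ) :
    pt f p = fderiv ℝ f p (0, 1) := by
  have h1 : HasDerivAt (fun t : ℝ => (p.1, t)) ((0:ℝ), (1:ℝ)) p.2 :=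
    HasDerivAt.prodMk (hasDerivAt_const p.2 p.1) (hasDerivAt_id p.2)
  have h2 := (hf.differentiable (by simp) p).hasFDerivAt.comp_hasDerivAt p.2 h1
  simpa [pt, Function.comp_def] using h2.deriv

theorem contDiff_px {f : ℝ × ℝ → ℝ} (hf : ContDiff ℝ (⊤ : ℕ∞) f) : ContDiff ℝ (⊤ : ℕ∞) (px f) := by
  have : px f = fun p => fderiv ℝ f p (1, 0) := funext (px_eq_fderiv hf)
  rw [this]
  exact (hf.fderiv_right (by simp)).clm_apply contDiff_const

theorem contDiff_pt {f : ℝ × ℝ → ℝ} (hf : ContDiff ℝ (⊤ : ℕ∞) f) : ContDiff ℝ (⊤ : ℕ∞) (pt f) := by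
  have : pt f = fun p => fderiv ℝ f p (0, 1) := funext (pt_eq_fderiv hf)
  rw [this]
  exact (hf.fderiv_right (by simp)).clm_apply contDiff_const

theorem sndDeriv {f : ℝ × ℝ → ℝ} (hf : ContDiff ℝ (⊤ : ℕ∞) f) (p : ℝ × ℝ) (v w : ℝ × ℝ) :
    fderiv ℝ (fun q => fderiv ℝ f q v) p w = fderiv ℝ (fderiv ℝ f) p w v := by
  have hd : DifferentiableAt ℝ (fderiv ℝ f) p :=
    ((hf.fderiv_right (m := (⊤ : ℕ∞)) (by simp)).differentiable (by simp)) p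
  rw [fderiv_clm_apply hd (differentiableAt_const v)]
  simp

theorem clairaut {f : ℝ × ℝ → ℝ} (hf : ContDiff ℝ (⊤ : ℕ∞) f) : pt (px f) = px (pt f) := by
  funext p
  have hpx : px f = fun q => fderiv ℝ f q (1, 0) := funext (px_eq_fderiv hf)
  have hpt : pt f = fun q => fderiv ℝ f q (0, 1) := funext (pt_eq_fderiv hf)
  rw [pt_eq_fderiv (contDiff_px hf), px_eq_fderiv (contDiff_pt hf), hpx, hpt,
    sndDeriv hf, sndDeriv hf]
  exact hf.contDiffAt.isSymmSndFDerivAt (by rw [minSmoothness_of_isRCLikeNormedField]; exact WithTop.coe_le_coe.mpr (le_top : (2 : ℕ∞) ≤ ⊤)) (0,1) (1,0)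

theorem px_of_hasDerivAt {g : ℝ × ℝ → ℝ} {p : ℝ × ℝ} {e : ℝ}
    (H : HasDerivAt (fun x => g (x, p.2)) e p.1) : px g p = e := H.deriv

theorem pt_of_hasDerivAt {g : ℝ × ℝ → ℝ} {p : ℝ × ℝ} {e : ℝ}
    (H : HasDerivAt (fun t => g (p.1, t)) e p.2) : pt g p = e := H.deriv

section Main

variable {V ψ : ℝ × ℝ → ℝ}

theorem hx1 (hV : ContDiff ℝ (⊤ : ℕ∞) V) (hψ : ContDiff ℝ (⊤ : ℕ∞) ψ) (hpos : ∀ p : ℝ × ℝ, 0 < ψ p)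
    (hschr : ∀ p : ℝ × ℝ, px (px ψ) p = V p * ψ p) :
    ∀ p, px (fun r => px ψ r / ψ r) p = V p - (px ψ p / ψ p) ^ 2 := by
  intro p
  have hne : ψ p ≠ 0 := (hpos p).ne'
  have H := (hasDerivX (contDiff_px hψ) p).div (hasDerivX hψ p) hne
  have h := px_of_hasDerivAt (g := fun r => px ψ r / ψ r) H
  rw [h, hschr p]
  field_simp

theorem ht1 (hV : ContDiff ℝ (⊤ : ℕ∞) V) (hψ : ContDiff ℝ (⊤ : ℕ∞) ψ) (hpos : ∀ p : ℝ × ℝ, 0 < ψ p)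
    (hevol : ∀ p : ℝ × ℝ, pt ψ p = 2 * V p * px ψ p - px V p * ψ p)
    (hschr : ∀ p : ℝ × ℝ, px (px ψ) p = V p * ψ p) :
    ∀ p, pt (fun r => px ψ r / ψ r) p =
      2 * px V p * (px ψ p / ψ p) + 2 * V p ^ 2 - px (px V) p
        - 2 * V p * (px ψ p / ψ p) ^ 2 := by
  intro p
  have hne : ψ p ≠ 0 := (hpos p).ne'
  have H := (hasDerivT (contDiff_px hψ) p).div (hasDerivT hψ p) hne
  have h := pt_of_hasDerivAt (g := fun r => px ψ r / ψ r) H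
  rw [clairaut hψ] at h
  have e1 : pt ψ = fun q => 2 * V q * px ψ q - px V q * ψ q := funext hevol
  simp only [e1] at h
  have H2 := (((hasDerivX hV p).const_mul 2).mul (hasDerivX (contDiff_px hψ) p)).sub
    ((hasDerivX (contDiff_px hV) p).mul (hasDerivX hψ p))
  have h2 := px_of_hasDerivAt (g := fun q => 2 * V q * px ψ q - px V q * ψ q) H2
  rw [h2, hschr p] at h
  rw [h]
  field_simp
  ring

theorem hUx (hV : ContDiff ℝ (⊤ : ℕ∞) V) (hψ : ContDiff ℝ (⊤ : ℕ∞) ψ) (hpos : ∀ p : ℝ × ℝ, 0 < ψ p)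
    (hschr : ∀ p : ℝ × ℝ, px (px ψ) p = V p * ψ p) :
    ∀ p, px (fun q => 2 * (px ψ q / ψ q) ^ 2 - V q) p =
      4 * (px ψ p / ψ p) * (V p - (px ψ p / ψ p) ^ 2) - px V p := by
  intro p
  have hA : ContDiff ℝ (⊤ : ℕ∞) (fun r => px ψ r / ψ r) :=
    (contDiff_px hψ).div hψ (fun q => (hpos q).ne')
  have H := (((hasDerivX hA p).pow 2).const_mul 2).sub (hasDerivX hV p)
  have h := px_of_hasDerivAt (g := fun q => 2 * (px ψ q / ψ q) ^ 2 - V q) H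
  rw [hx1 hV hψ hpos hschr p] at h
  rw [h]; ring

theorem hUxx (hV : ContDiff ℝ (⊤ : ℕ∞) V) (hψ : ContDiff ℝ (⊤ : ℕ∞) ψ) (hpos : ∀ p : ℝ × ℝ, 0 < ψ p)
    (hschr : ∀ p : ℝ × ℝ, px (px ψ) p = V p * ψ p) :
    ∀ p, px (px (fun q => 2 * (px ψ q / ψ q) ^ 2 - V q)) p =
      4 * (V p - (px ψ p / ψ p) ^ 2) ^ 2
        + 4 * (px ψ p / ψ p) * (px V p - 2 * (px ψ p / ψ p) * (V p - (px ψ p / ψ p) ^ 2))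
        - px (px V) p := by
  intro p
  have hA : ContDiff ℝ (⊤ : ℕ∞) (fun r => px ψ r / ψ r) :=
    (contDiff_px hψ).div hψ (fun q => (hpos q).ne')
  rw [funext (hUx hV hψ hpos hschr)]
  have H := (((hasDerivX hA p).const_mul 4).mul
      ((hasDerivX hV p).sub ((hasDerivX hA p).pow 2))).sub (hasDerivX (contDiff_px hV) p)
  have h := px_of_hasDerivAt
    (g := fun p => 4 * (px ψ p / ψ p) * (V p - (px ψ p / ψ p) ^ 2) - px V p) H
  rw [hx1 hV hψ hpos hschr p] at h
  rw [h]; simp only [Pi.sub_apply, Pi.pow_apply, Pi.mul_apply, Prod.mk.eta]; ring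

theorem hUxxx (hV : ContDiff ℝ (⊤ : ℕ∞) V) (hψ : ContDiff ℝ (⊤ : ℕ∞) ψ) (hpos : ∀ p : ℝ × ℝ, 0 < ψ p)
    (hschr : ∀ p : ℝ × ℝ, px (px ψ) p = V p * ψ p) :
    ∀ p, px (px (px (fun q => 2 * (px ψ q / ψ q) ^ 2 - V q))) p =
      8 * (V p - (px ψ p / ψ p) ^ 2)
          * (px V p - 2 * (px ψ p / ψ p) * (V p - (px ψ p / ψ p) ^ 2))
        + 4 * (V p - (px ψ p / ψ p) ^ 2)
          * (px V p - 2 * (px ψ p / ψ p) * (V p - (px ψ p / ψ p) ^ 2))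
        + 4 * (px ψ p / ψ p)
          * (px (px V) p - 2 * (V p - (px ψ p / ψ p) ^ 2) * (V p - (px ψ p / ψ p) ^ 2)
            - 2 * (px ψ p / ψ p)
              * (px V p - 2 * (px ψ p / ψ p) * (V p - (px ψ p / ψ p) ^ 2)))
        - px (px (px V)) p := by
  intro p
  have hA : ContDiff ℝ (⊤ : ℕ∞) (fun r => px ψ r / ψ r) :=
    (contDiff_px hψ).div hψ (fun q => (hpos q).ne')
  rw [funext (hUxx hV hψ hpos hschr)]
  have HVA : HasDerivAt (fun x => V (x, p.2) - ((fun r => px ψ r / ψ r) (x, p.2)) ^ 2)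
      (px V p - 2 * ((fun r => px ψ r / ψ r) p) ^ 1 * px (fun r => px ψ r / ψ r) p) p.1 :=
    (hasDerivX hV p).sub ((hasDerivX hA p).pow 2)
  have H := ((((HVA.pow 2).const_mul 4).add
      (((hasDerivX hA p).const_mul 4).mul
        ((hasDerivX (contDiff_px hV) p).sub
          (((hasDerivX hA p).const_mul 2).mul HVA)))).sub
    (hasDerivX (contDiff_px (contDiff_px hV)) p))
  have h := px_of_hasDerivAt (g := fun p =>
      4 * (V p - (px ψ p / ψ p) ^ 2) ^ 2
        + 4 * (px ψ p / ψ p) * (px V p - 2 * (px ψ p / ψ p) * (V p - (px ψ p / ψ p) ^ 2))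
        - px (px V) p) H
  rw [hx1 hV hψ hpos hschr p] at h
  rw [h]; simp only [Pi.sub_apply, Pi.pow_apply, Pi.mul_apply, Prod.mk.eta]; ring

theorem hUt (hV : ContDiff ℝ (⊤ : ℕ∞) V) (hψ : ContDiff ℝ (⊤ : ℕ∞) ψ) (hpos : ∀ p : ℝ × ℝ, 0 < ψ p)
    (hevol : ∀ p : ℝ × ℝ, pt ψ p = 2 * V p * px ψ p - px V p * ψ p)
    (hschr : ∀ p : ℝ × ℝ, px (px ψ) p = V p * ψ p) :
    ∀ p, pt (fun q => 2 * (px ψ q / ψ q) ^ 2 - V q) p =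
      4 * (px ψ p / ψ p) * (2 * px V p * (px ψ p / ψ p) + 2 * V p ^ 2 - px (px V) p
        - 2 * V p * (px ψ p / ψ p) ^ 2) - pt V p := by
  intro p
  have hA : ContDiff ℝ (⊤ : ℕ∞) (fun r => px ψ r / ψ r) :=
    (contDiff_px hψ).div hψ (fun q => (hpos q).ne')
  have H := (((hasDerivT hA p).pow 2).const_mul 2).sub (hasDerivT hV p)
  have h := pt_of_hasDerivAt (g := fun q => 2 * (px ψ q / ψ q) ^ 2 - V q) H
  rw [ht1 hV hψ hpos hevol hschr p] at h
  rw [h]; ring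

end Main

/-- Auto-Bäcklund transformation for KdV: with φ = ψ_x/ψ as in the inversion of the
    Miura transformation, V̂ = φ² - φ_x also solves KdV. -/
theorem kdv_auto_baecklund (V ψ : ℝ × ℝ → ℝ)
    (hV : ContDiff ℝ (⊤ : ℕ∞) V) (hψ : ContDiff ℝ (⊤ : ℕ∞) ψ)
    (hpos : ∀ p : ℝ × ℝ, 0 < ψ p)
    (hKdV : ∀ p : ℝ × ℝ, KdVop V p = 0)
    (hevol : ∀ p : ℝ × ℝ, pt ψ p = 2 * V p * px ψ p - px V p * ψ p)
    (hschr : ∀ p : ℝ × ℝ, px (px ψ) p = V p * ψ p) :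
    ∀ p : ℝ × ℝ,
      KdVop (fun q => ((px ψ q / ψ q)) ^ 2 - px (fun r => px ψ r / ψ r) q) p = 0 := by
  intro p
  have hEq : (fun q => ((px ψ q / ψ q)) ^ 2 - px (fun r => px ψ r / ψ r) q)
      = fun q => 2 * (px ψ q / ψ q) ^ 2 - V q := by
    funext q
    rw [hx1 hV hψ hpos hschr q]
    ring
  rw [hEq]
  have hk := hKdV p
  simp only [KdVop] at hk ⊢
  rw [hUt hV hψ hpos hevol hschr p, hUx hV hψ hpos hschr p,
    hUxxx hV hψ hpos hschr p]
  linear_combination -hk
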